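/- arXiv:1510.08781 — 2 statements merged into one kernel-verified Lean document; each statement's English description precedes it below -/
import Mathlib

section
/- If z ⊆ y ⊆ x are infinite sets of natural numbers, then ρ(y,x) ≤ ρ(z,x). -/
open MeasureTheory Filter Set
open scoped ENNReal

noncomputable section

/-- `fEnum x` is the increasing enumeration `f_x : ω → ω` of the set `x ∈ [ω]^ω`. -/
def fEnum (x : Set ℕ) : ℕ → ℕ := Nat.nth (· ∈ x)

/-- The sequence `α^x ∈ [1/4,3/4]^ω` attached to `x ∈ [ω]^ω`:
`α^x_n = 1/4 + 1/(2·√(f_x⁻¹(n)+1))` if `n ∈ x` and `α^x_n = 1/4` otherwise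
(for `n ∈ x`, `f_x⁻¹(n)` is the number of elements of `x` below `n`). -/
noncomputable def alphaSeq (x : Set ℕ) (n : ℕ) : ℝ :=
  haveI := Classical.decPred (· ∈ x)
  if n ∈ x then 1/4 + 1/(2 * Real.sqrt ((Nat.count (· ∈ x) n : ℝ) + 1)) else 1/4

/-- `ρ(x,y) = Σ_n (α^x_n - α^y_n)² ∈ [0,∞]`. -/
noncomputable def rho (x y : Set ℕ) : ℝ≥0∞ :=
  ∑' n : ℕ, ENNReal.ofReal ((alphaSeq x n - alphaSeq y n)^2)

/-- `F = {g ∈ [ω]^ω : ρ(g,ω) < ∞}`. -/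
def Fset : Set (Set ℕ) := {g | g.Infinite ∧ rho g Set.univ < ⊤}

/-- The monoid operation `x · y = (f_y ∘ f_x)[ω]`. -/
def dotOp (x y : Set ℕ) : Set ℕ := Set.range (fEnum y ∘ fEnum x)

/-- `IsKakutaniProduct x μ` says that `μ` is the product measure
`μ^x = ∏_n (α^x_n δ_0 + (1 - α^x_n) δ_1)` on Cantor space `2^ω = ℕ → Bool`
(identifying `0` with `false` and `1` with `true`), i.e. `μ` is the Borel
probability measure giving each finite cylinder the corresponding product of
the coordinate weights.  These conditions determine `μ^x` uniquely. -/
def IsKakutaniProduct (x : Set ℕ) (μ : Measure (ℕ → Bool)) : Prop :=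
  IsProbabilityMeasure μ ∧
    ∀ (s : Finset ℕ) (f : ℕ → Bool),
      μ {g | ∀ n ∈ s, g n = f n} =
        ∏ n ∈ s, (if f n = false then ENNReal.ofReal (alphaSeq x n)
                  else ENNReal.ofReal (1 - alphaSeq x n))

/-- The subset of `ℕ` coded by a point of Cantor space. -/
def toSet (f : ℕ → Bool) : Set ℕ := {n | f n = true}

/-!
Let `j` send the `i`-th element of `y` to the `i`-th element of `z` and fix every point outside
`y`; it is injective. Off `y` the terms of `ρ(y,x)` at `n` and of `ρ(z,x)` at `j n` coincide. For
`n ∈ y`, `α^y_n = α^z_{j n} = 1/4 + 1/(2√(i+1))`, while `n ≤ j n` (as `z ⊆ y`) and `y ⊆ x` give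
`α^x_{j n} ≤ α^x_n ≤ α^y_n`, so the term at `j n` is the larger one. Summing, `ρ(y,x) ≤ ρ(z,x)`.
-/

open Nat Function

def alphaExcess (k : ℕ) : ℝ := 1 / (2 * √((k : ℝ) + 1))

lemma antitone_alphaExcess : Antitone alphaExcess := by
  intro k l hkl
  unfold alphaExcess
  gcongr

lemma alphaSeq_of_mem {x : Set ℕ} [DecidablePred (· ∈ x)] {n : ℕ} (hn : n ∈ x) :
    alphaSeq x n = 1 / 4 + alphaExcess (count (· ∈ x) n) := by
  rw [alphaSeq, if_pos hn, alphaExcess]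
  congr!

lemma alphaSeq_of_notMem {x : Set ℕ} {n : ℕ} (hn : n ∉ x) : alphaSeq x n = 1 / 4 := by
  rw [alphaSeq, if_neg hn]

lemma sub_sq_le_sub_sq {a b c : ℝ} (hba : b ≤ a) (hcb : c ≤ b) : (a - b) ^ 2 ≤ (a - c) ^ 2 :=
  pow_le_pow_left₀ (sub_nonneg.2 hba) (by linarith) 2

section Reindex

variable {x y z : Set ℕ} [DecidablePred (· ∈ y)]

def reindex (y z : Set ℕ) [DecidablePred (· ∈ y)] : ℕ → ℕ :=
  y.piecewise (fun n => nth (· ∈ z) (count (· ∈ y) n)) id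

lemma reindex_injective (hz : z.Infinite) (hzy : z ⊆ y) : Injective (reindex y z) := by
  refine (Set.injective_piecewise_iff _).2 ⟨?_, injOn_id _, ?_⟩
  · exact (nth_injective hz).comp_injOn fun m hm n hn => count_injective hm hn
  · rintro m - n hn rfl
    exact hn (hzy (nth_mem_of_infinite hz _))

lemma le_nth_count_of_subset (hz : z.Infinite) (hzy : z ⊆ y) (n : ℕ) :
    n ≤ nth (· ∈ z) (count (· ∈ y) n) := by
  classical
  exact (count_le_iff_le_nth (p := (· ∈ z)) hz).1 (count_mono_left fun _ _ hk => hzy hk)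

lemma sq_alphaSeq_sub_le_reindex (hz : z.Infinite) (hzy : z ⊆ y) (hyx : y ⊆ x) (n : ℕ) :
    (alphaSeq y n - alphaSeq x n) ^ 2 ≤
      (alphaSeq z (reindex y z n) - alphaSeq x (reindex y z n)) ^ 2 := by
  classical
  by_cases hn : n ∈ y
  · set m := nth (· ∈ z) (count (· ∈ y) n)
    have hmz : m ∈ z := nth_mem_of_infinite hz _
    have hcount : count (· ∈ z) m = count (· ∈ y) n := count_nth_of_infinite (p := (· ∈ z)) hz _
    have hyx_count : count (· ∈ y) n ≤ count (· ∈ x) n := count_mono_left fun _ _ hk => hyx hk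
    have hnm : count (· ∈ x) n ≤ count (· ∈ x) m :=
      count_monotone _ (le_nth_count_of_subset hz hzy n)
    rw [reindex, Set.piecewise_eq_of_mem _ _ _ hn, alphaSeq_of_mem hn, alphaSeq_of_mem (hyx hn),
      alphaSeq_of_mem hmz, alphaSeq_of_mem (hyx (hzy hmz)), hcount, add_sub_add_left_eq_sub,
      add_sub_add_left_eq_sub]
    exact sub_sq_le_sub_sq (antitone_alphaExcess hyx_count) (antitone_alphaExcess hnm)
  · rw [reindex, Set.piecewise_eq_of_notMem _ _ _ hn, id, alphaSeq_of_notMem hn,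
      alphaSeq_of_notMem fun h => hn (hzy h)]

end Reindex

theorem rho_antitone_general (x y z : Set ℕ) (hz : z.Infinite) (hzy : z ⊆ y) (hyx : y ⊆ x) :
    rho y x ≤ rho z x := by
  classical
  calc rho y x
      ≤ ∑' n, ENNReal.ofReal ((alphaSeq z (reindex y z n) - alphaSeq x (reindex y z n)) ^ 2) :=
        ENNReal.tsum_le_tsum fun n =>
          ENNReal.ofReal_le_ofReal (sq_alphaSeq_sub_le_reindex hz hzy hyx n)
    _ ≤ rho z x := ENNReal.tsum_comp_le_tsum_of_injective (reindex_injective hz hzy) _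

/-- If `z ⊆ y ⊆ x` are infinite sets of naturals then `ρ(y,x) ≤ ρ(z,x)`. -/
theorem rho_antitone (x y z : Set ℕ)
    (hx : x.Infinite) (hy : y.Infinite) (hz : z.Infinite)
    (hzy : z ⊆ y) (hyx : y ⊆ x) :
    rho y x ≤ rho z x :=
  rho_antitone_general x y z hz hzy hyx

end
end

section
/- For every infinite set x of natural numbers, consider the equivalence relation ∼^x on [x]^ω defined by z ∼^x y iff μ^z and μ^y are equivalent measures. Then every ∼^x-equivalence class is both dense and meagre in [x]^ω (with the topology [x]^ω inherits as a subspace of Cantor space via characteristic functions). -/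
/-!
Kakutani's dichotomy for the product measures `μ^α = ∏ₙ (αₙ δ₀ + (1 - αₙ) δ₁)` with all
parameters in `[1/4, 3/4]`: `μ^β ≪ μ^α` iff `∑ₙ (αₙ - βₙ)² < ∞`. If the series converges, the
χ²-bound `μ^β(C)² ≤ exp (6 ∑ₙ (αₙ - βₙ)²) μ^α(C)` holds on cylinders, and outer regularity of
`μ^α` turns it into `μ^β ≪ μ^α`. If it diverges, the Hellinger affinity `∑ √(μ^α(f) μ^β(f))`
over patterns `f` of length `N` is at most `exp (-∑_{n<N} (αₙ - βₙ)² / 4) → 0`, and the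
likelihood-ratio cylinders witness `¬ μ^β ≪ μ^α`.

So the class of `z` is `{y : ∑ₙ (α^y_n - α^z_n)² < ∞}`. Changing `z` below some `m` shifts its
counting function beyond `m` by a constant `d`, which moves the bump `1/(2√(k+1))` of the `k`-th
element by `O(d k^{-3/2})`; hence the class is dense. It is covered by the closed sets
`{y : every partial sum is ≤ N}`, each with dense complement: after any finite stem, deleting a
long block of elements of `z` contributes an arbitrarily long stretch of the harmonic series
`∑ 1/(4(k+1))`.
-/

open MeasureTheory Filter Set
open scoped ENNReal

noncomputable section

open Topology

section BernoulliPatterns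

def bernWeight (a : ℝ) (b : Bool) : ℝ := bif b then 1 - a else a

def patternWeight (α : ℕ → ℝ) {N : ℕ} (f : Fin N → Bool) : ℝ :=
  ∏ i : Fin N, bernWeight (α i) (f i)

variable {α : ℕ → ℝ} {N : ℕ}

theorem sum_prod_apply_bool (φ : Fin N → Bool → ℝ) :
    ∑ f : Fin N → Bool, ∏ i, φ i (f i) = ∏ i, (φ i false + φ i true) := by
  simp [← Fintype.prod_sum, add_comm]

theorem bernWeight_nonneg {a : ℝ} (ha : a ∈ Icc 0 1) (b : Bool) : 0 ≤ bernWeight a b := by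
  cases b <;> simp [bernWeight, ha.1, ha.2]

theorem patternWeight_nonneg (hα : ∀ n, α n ∈ Icc 0 1) (f : Fin N → Bool) :
    0 ≤ patternWeight α f :=
  Finset.prod_nonneg fun i _ => bernWeight_nonneg (hα i) _

end BernoulliPatterns

section Affinity

variable {α β : ℕ → ℝ} {N : ℕ}

theorem sqrt_mul_add_sqrt_one_sub_mul_le {a b : ℝ} (ha : a ∈ Icc 0 1) (hb : b ∈ Icc 0 1) :
    √(a * b) + √((1 - a) * (1 - b)) ≤ 1 - (a - b) ^ 2 / 4 := by
  obtain ⟨ha0, ha1⟩ := ha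
  obtain ⟨hb0, hb1⟩ := hb
  have hs := Real.sq_sqrt ha0
  have ht := Real.sq_sqrt hb0
  have hu := Real.sq_sqrt (sub_nonneg.2 ha1)
  have hv := Real.sq_sqrt (sub_nonneg.2 hb1)
  have hs1 : √a ≤ 1 := Real.sqrt_le_one.2 ha1
  have ht1 : √b ≤ 1 := Real.sqrt_le_one.2 hb1
  have hu1 : √(1 - a) ≤ 1 := Real.sqrt_le_one.2 (by linarith)
  have hv1 : √(1 - b) ≤ 1 := Real.sqrt_le_one.2 (by linarith)
  rw [Real.sqrt_mul ha0, Real.sqrt_mul (sub_nonneg.2 ha1)]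
  -- `a - b = (√a - √b)(√a + √b)` with `√a + √b ≤ 2`, and likewise for `1 - a`, `1 - b`
  have h1 : (a - b) ^ 2 ≤ 4 * (√a - √b) ^ 2 := by
    have : a - b = (√a - √b) * (√a + √b) := by nlinarith
    rw [this, mul_pow]
    nlinarith [sq_nonneg (√a - √b), Real.sqrt_nonneg a, Real.sqrt_nonneg b]
  have h2 : (a - b) ^ 2 ≤ 4 * (√(1 - a) - √(1 - b)) ^ 2 := by
    have : a - b = (√(1 - b) - √(1 - a)) * (√(1 - b) + √(1 - a)) := by nlinarith
    rw [this, mul_pow]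
    nlinarith [sq_nonneg (√(1 - a) - √(1 - b)), Real.sqrt_nonneg (1 - a),
      Real.sqrt_nonneg (1 - b)]
  nlinarith

theorem Real.min_le_sqrt_mul {p q : ℝ} (hp : 0 ≤ p) (hq : 0 ≤ q) : min p q ≤ √(p * q) :=
  Real.le_sqrt_of_sq_le <| by
    rw [sq]; exact mul_le_mul (min_le_left p q) (min_le_right p q) (le_min hp hq) hp

theorem sum_sqrt_patternWeight_mul_le (hα : ∀ n, α n ∈ Icc 0 1) (hβ : ∀ n, β n ∈ Icc 0 1) :
    ∑ f : Fin N → Bool, √(patternWeight α f * patternWeight β f)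
      ≤ Real.exp (-(∑ n ∈ Finset.range N, (α n - β n) ^ 2) / 4) := by
  have hprod : ∀ f : Fin N → Bool, √(patternWeight α f * patternWeight β f)
      = ∏ i : Fin N, √(bernWeight (α i) (f i) * bernWeight (β i) (f i)) := fun f => by
    rw [patternWeight, patternWeight, ← Finset.prod_mul_distrib, Real.sqrt_prod]
    exact fun i _ => mul_nonneg (bernWeight_nonneg (hα i) _) (bernWeight_nonneg (hβ i) _)
  rw [Finset.sum_congr rfl fun f _ => hprod f,
    sum_prod_apply_bool fun i b => √(bernWeight (α i) b * bernWeight (β i) b),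
    ← Fin.sum_univ_eq_sum_range (fun n => (α n - β n) ^ 2), neg_div, Finset.sum_div,
    ← Finset.sum_neg_distrib, Real.exp_sum]
  refine Finset.prod_le_prod (fun i _ => by positivity) fun i _ => ?_
  calc _ ≤ 1 - (α i - β i) ^ 2 / 4 := by
        simpa [bernWeight] using sqrt_mul_add_sqrt_one_sub_mul_le (hα i) (hβ i)
    _ ≤ _ := by linarith [Real.add_one_le_exp (-((α i - β i) ^ 2 / 4))]

end Affinity

section ChiSquare

variable {α β : ℕ → ℝ} {N : ℕ}

theorem chiSq_le_exp {a : ℝ} (ha : a ∈ Icc (1 / 4) (3 / 4)) (b : ℝ) :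
    b ^ 2 / a + (1 - b) ^ 2 / (1 - a) ≤ Real.exp (6 * (a - b) ^ 2) := by
  obtain ⟨ha1, ha2⟩ := ha
  -- the left side is `1 + (a - b)² / (a (1 - a))`, and `a (1 - a) ≥ 3/16`
  have key : b ^ 2 / a + (1 - b) ^ 2 / (1 - a) ≤ 1 + 6 * (a - b) ^ 2 := by
    rw [div_add_div _ _ (by linarith) (by linarith), div_le_iff₀ (by nlinarith)]
    nlinarith [sq_nonneg (a - b), mul_nonneg (mul_nonneg (sub_nonneg.2 ha1) (sub_nonneg.2 ha2))
      (sq_nonneg (a - b))]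
  linarith [Real.add_one_le_exp (6 * (a - b) ^ 2)]

theorem patternWeight_pos (hα : ∀ n, α n ∈ Icc (1 / 4) (3 / 4)) (f : Fin N → Bool) :
    0 < patternWeight α f :=
  Finset.prod_pos fun i _ => by
    obtain ⟨h1, h2⟩ := hα i
    cases f i <;> simp [bernWeight] <;> linarith

theorem sum_sq_patternWeight_div_le (hα : ∀ n, α n ∈ Icc (1 / 4) (3 / 4)) :
    ∑ f : Fin N → Bool, patternWeight β f ^ 2 / patternWeight α f
      ≤ Real.exp (6 * ∑ n ∈ Finset.range N, (α n - β n) ^ 2) := by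
  have hprod : ∀ f : Fin N → Bool, patternWeight β f ^ 2 / patternWeight α f
      = ∏ i : Fin N, bernWeight (β i) (f i) ^ 2 / bernWeight (α i) (f i) := fun f => by
    rw [patternWeight, patternWeight, ← Finset.prod_pow, ← Finset.prod_div_distrib]
  rw [Finset.sum_congr rfl fun f _ => hprod f,
    sum_prod_apply_bool fun i b => bernWeight (β i) b ^ 2 / bernWeight (α i) b,
    ← Fin.sum_univ_eq_sum_range (fun n => (α n - β n) ^ 2), Finset.mul_sum, Real.exp_sum]
  refine Finset.prod_le_prod (fun i _ => ?_) fun i _ => ?_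
  · obtain ⟨h1, h2⟩ := hα i
    simp only [bernWeight, cond_false, cond_true]
    exact add_nonneg (div_nonneg (sq_nonneg _) (by linarith))
      (div_nonneg (sq_nonneg _) (by linarith))
  · simpa [bernWeight] using chiSq_le_exp (hα i) (β i)

theorem sq_sum_patternWeight_le (hα : ∀ n, α n ∈ Icc (1 / 4) (3 / 4)) (T : Finset (Fin N → Bool)) :
    (∑ f ∈ T, patternWeight β f) ^ 2
      ≤ Real.exp (6 * ∑ n ∈ Finset.range N, (α n - β n) ^ 2) * ∑ f ∈ T, patternWeight α f := by
  have hpos := patternWeight_pos hα (N := N)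
  refine (Finset.sum_sq_le_sum_mul_sum_of_sq_le_mul T
    (f := fun f => patternWeight β f ^ 2 / patternWeight α f)
    (fun f _ => div_nonneg (sq_nonneg _) (hpos f).le) (fun f _ => (hpos f).le)
    fun f _ => (div_mul_cancel₀ _ (hpos f).ne').ge).trans ?_
  gcongr
  · exact Finset.sum_nonneg fun f _ => (hpos f).le
  · exact (Finset.sum_le_sum_of_subset_of_nonneg (Finset.subset_univ T)
      fun f _ _ => div_nonneg (sq_nonneg _) (hpos f).le).trans (sum_sq_patternWeight_div_le hα)

end ChiSquare

section Cylinders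

variable {α : ℕ → ℝ} {μ : Measure (ℕ → Bool)} {N : ℕ}

def prefixCylinder (N : ℕ) (T : Finset (Fin N → Bool)) : Set (ℕ → Bool) :=
  (fun g (i : Fin N) => g i) ⁻¹' T

theorem measurable_restrict_fin : Measurable fun (g : ℕ → Bool) (i : Fin N) => g i :=
  measurable_pi_lambda _ fun _ => measurable_pi_apply _

theorem measurableSet_prefixCylinder (T : Finset (Fin N → Bool)) :
    MeasurableSet (prefixCylinder N T) :=
  measurable_restrict_fin T.finite_toSet.measurableSet

theorem compl_prefixCylinder (T : Finset (Fin N → Bool)) :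
    (prefixCylinder N T)ᶜ = prefixCylinder N Tᶜ := by
  ext g; simp [prefixCylinder]

def IsBernoulliProduct (α : ℕ → ℝ) (μ : Measure (ℕ → Bool)) : Prop :=
  ∀ (s : Finset ℕ) (f : ℕ → Bool),
    μ {g | ∀ n ∈ s, g n = f n} = ∏ n ∈ s, ENNReal.ofReal (bernWeight (α n) (f n))

theorem IsKakutaniProduct.isBernoulliProduct {x : Set ℕ} (h : IsKakutaniProduct x μ) :
    IsBernoulliProduct (alphaSeq x) μ := fun s f => by
  rw [h.2 s f]
  refine Finset.prod_congr rfl fun n _ => ?_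
  cases f n <;> simp [bernWeight]

theorem IsBernoulliProduct.isProbabilityMeasure (h : IsBernoulliProduct α μ) :
    IsProbabilityMeasure μ :=
  ⟨by simpa using h ∅ fun _ => false⟩

theorem IsBernoulliProduct.measure_prefixCylinder (h : IsBernoulliProduct α μ)
    (hα : ∀ n, α n ∈ Icc 0 1) (T : Finset (Fin N → Bool)) :
    μ (prefixCylinder N T) = ENNReal.ofReal (∑ f ∈ T, patternWeight α f) := by
  rw [prefixCylinder, ← Measure.map_apply measurable_restrict_fin T.finite_toSet.measurableSet,
    ← sum_measure_singleton, ENNReal.ofReal_sum_of_nonneg fun f _ => patternWeight_nonneg hα f]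
  refine Finset.sum_congr rfl fun f _ => ?_
  set F : ℕ → Bool := fun n => if hn : n < N then f ⟨n, hn⟩ else false
  have hF : (fun (g : ℕ → Bool) (i : Fin N) => g i) ⁻¹' {f}
      = {g | ∀ n ∈ Finset.range N, g n = F n} := by
    ext g
    simp only [mem_preimage, mem_singleton_iff, funext_iff, Finset.mem_range, mem_ofPred_eq, F]
    exact ⟨fun hg n hn => by rw [dif_pos hn, ← hg], fun hg i => by simpa using hg i i.2⟩
  rw [Measure.map_apply measurable_restrict_fin (measurableSet_singleton f), hF, h,
    ← ENNReal.ofReal_prod_of_nonneg fun n _ => bernWeight_nonneg (hα n) _, patternWeight,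
    ← Fin.prod_univ_eq_prod_range (fun n => bernWeight (α n) (F n))]
  simp [F]

end Cylinders

section AbsoluteContinuity

variable {μ ν : Measure (ℕ → Bool)} {N : ℕ}

theorem IsOpen.exists_cylinder_subset {E : ℕ → Type*} [∀ n, TopologicalSpace (E n)]
    [∀ n, DiscreteTopology (E n)] {U : Set (∀ n, E n)} (hU : IsOpen U) {g : ∀ n, E n}
    (hg : g ∈ U) : ∃ N, PiNat.cylinder g N ⊆ U := by
  obtain ⟨_, ⟨y, N, rfl⟩, hgy, hsub⟩ :=
    (PiNat.isTopologicalBasis_cylinders E).exists_subset_of_mem_open hg hU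
  exact ⟨N, PiNat.mem_cylinder_iff_eq.1 hgy ▸ hsub⟩

open Classical in
def innerPatterns (U : Set (ℕ → Bool)) (N : ℕ) : Finset (Fin N → Bool) :=
  Finset.univ.filter fun f => ∀ g : ℕ → Bool, (fun i : Fin N => g i) = f → g ∈ U

theorem mem_prefixCylinder_innerPatterns {U : Set (ℕ → Bool)} {g : ℕ → Bool} :
    g ∈ prefixCylinder N (innerPatterns U N) ↔ PiNat.cylinder g N ⊆ U := by
  simp only [prefixCylinder, innerPatterns, mem_preimage, Finset.coe_filter, Finset.mem_univ,
    true_and, mem_ofPred_eq, funext_iff, Fin.forall_iff]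
  rfl

theorem iUnion_prefixCylinder_innerPatterns {U : Set (ℕ → Bool)} (hU : IsOpen U) :
    ⋃ N, prefixCylinder N (innerPatterns U N) = U := by
  refine Subset.antisymm (iUnion_subset fun N g hg => ?_) fun g hg => ?_
  · exact mem_prefixCylinder_innerPatterns.1 hg (PiNat.self_mem_cylinder g N)
  · obtain ⟨N, hN⟩ := hU.exists_cylinder_subset hg
    exact mem_iUnion.2 ⟨N, mem_prefixCylinder_innerPatterns.2 hN⟩

theorem monotone_prefixCylinder_innerPatterns (U : Set (ℕ → Bool)) :
    Monotone fun N => prefixCylinder N (innerPatterns U N) := fun _ _ hNM _ hg =>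
  mem_prefixCylinder_innerPatterns.2 <|
    (PiNat.cylinder_anti _ hNM).trans (mem_prefixCylinder_innerPatterns.1 hg)

theorem absolutelyContinuous_of_sq_le_mul [IsFiniteMeasure μ] {K : ℝ≥0∞} (hK : K ≠ ∞)
    (h : ∀ N (T : Finset (Fin N → Bool)),
      ν (prefixCylinder N T) ^ 2 ≤ K * μ (prefixCylinder N T)) :
    ν ≪ μ := by
  have hopen : ∀ U, IsOpen U → ν U ^ 2 ≤ K * μ U := fun U hU => by
    rw [← iUnion_prefixCylinder_innerPatterns hU,
      (monotone_prefixCylinder_innerPatterns U).measure_iUnion, ENNReal.iSup_pow]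
    exact iSup_le fun N => (h N _).trans <| by gcongr; exact subset_iUnion_of_subset N subset_rfl
  refine Measure.AbsolutelyContinuous.mk fun A _ hA => pow_eq_zero_iff two_ne_zero |>.1 ?_
  refine le_antisymm (ENNReal.le_of_forall_pos_le_add fun ε hε _ => ?_) zero_le
  obtain ⟨U, hAU, hU, hμU⟩ := Set.exists_isOpen_lt_of_lt A (ε / K)
    (hA ▸ ENNReal.div_pos (by simpa using hε.ne') hK)
  calc ν A ^ 2 ≤ ν U ^ 2 := by gcongr
    _ ≤ K * μ U := hopen U hU
    _ ≤ K * (ε / K) := by gcongr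
    _ ≤ 0 + ε := by rw [zero_add]; exact ENNReal.mul_div_le

end AbsoluteContinuity

theorem MeasureTheory.Measure.not_absolutelyContinuous_of_forall_exists_le {X : Type*}
    [MeasurableSpace X] {μ ν : Measure X} [IsProbabilityMeasure ν]
    (h : ∀ ε : ℝ≥0∞, 0 < ε → ∃ A, MeasurableSet A ∧ μ A ≤ ε ∧ ν Aᶜ ≤ ε) : ¬ ν ≪ μ := by
  intro hac
  obtain ⟨ε, hε0, hεsum⟩ := ENNReal.exists_pos_sum_of_countable' one_ne_zero ℕ
  choose A _ hμA hνA using fun j => h (ε j) (hε0 j)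
  have hμ : μ (⋂ j, A j) = 0 :=
    le_antisymm (ge_of_tendsto' (ENNReal.tendsto_atTop_zero_of_tsum_ne_top hεsum.ne_top)
      fun j => (measure_mono (iInter_subset A j)).trans (hμA j)) zero_le
  have hν : ν (⋂ j, A j)ᶜ < 1 := by
    rw [compl_iInter]
    exact ((measure_iUnion_le _).trans (ENNReal.tsum_le_tsum hνA)).trans_lt hεsum
  have := measure_univ_le_add_compl (⋂ j, A j) (μ := ν)
  rw [measure_univ, hac hμ, zero_add] at this
  exact this.not_gt hν

section Kakutani

variable {α β : ℕ → ℝ} {μ ν : Measure (ℕ → Bool)}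

theorem sum_patternWeight_le_exp (hα : ∀ n, α n ∈ Icc 0 1) (hβ : ∀ n, β n ∈ Icc 0 1) {N : ℕ}
    {T : Finset (Fin N → Bool)} (hT : ∀ f ∈ T, patternWeight α f ≤ patternWeight β f) :
    ∑ f ∈ T, patternWeight α f ≤ Real.exp (-(∑ n ∈ Finset.range N, (α n - β n) ^ 2) / 4) :=
  calc ∑ f ∈ T, patternWeight α f ≤ ∑ f ∈ T, √(patternWeight α f * patternWeight β f) :=
        Finset.sum_le_sum fun f hf => (min_eq_left (hT f hf)).symm.trans_le <|
          Real.min_le_sqrt_mul (patternWeight_nonneg hα f) (patternWeight_nonneg hβ f)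
    _ ≤ ∑ f : Fin N → Bool, √(patternWeight α f * patternWeight β f) :=
        Finset.sum_le_sum_of_subset_of_nonneg (Finset.subset_univ T) fun _ _ _ => by positivity
    _ ≤ _ := sum_sqrt_patternWeight_mul_le hα hβ

theorem IsBernoulliProduct.not_absolutelyContinuous_of_not_summable (hμ : IsBernoulliProduct α μ)
    (hν : IsBernoulliProduct β ν) (hα : ∀ n, α n ∈ Icc 0 1) (hβ : ∀ n, β n ∈ Icc 0 1)
    (h : ¬ Summable fun n => (α n - β n) ^ 2) : ¬ ν ≪ μ := by
  have := hν.isProbabilityMeasure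
  have hS := (not_summable_iff_tendsto_nat_atTop_of_nonneg fun n => sq_nonneg (α n - β n)).1 h
  have hlim : Tendsto (fun N => ENNReal.ofReal
      (Real.exp (-(∑ n ∈ Finset.range N, (α n - β n) ^ 2) / 4))) atTop (𝓝 0) := by
    simpa using ENNReal.tendsto_ofReal (Real.tendsto_exp_atBot.comp
      ((tendsto_neg_atTop_atBot.comp hS).atBot_div_const (by norm_num : (0 : ℝ) < 4)))
  refine Measure.not_absolutelyContinuous_of_forall_exists_le fun ε hε => ?_
  obtain ⟨N, hN⟩ := ((tendsto_order.1 hlim).2 ε hε).exists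
  -- separate the two product laws by the likelihood ratio at depth `N`
  let T : Finset (Fin N → Bool) :=
    Finset.univ.filter fun f => patternWeight α f ≤ patternWeight β f
  refine ⟨prefixCylinder N T, measurableSet_prefixCylinder T, ?_, ?_⟩
  · rw [hμ.measure_prefixCylinder hα]
    refine le_trans (ENNReal.ofReal_le_ofReal (sum_patternWeight_le_exp hα hβ fun f hf => ?_)) hN.le
    exact (Finset.mem_filter.1 hf).2
  · rw [compl_prefixCylinder, hν.measure_prefixCylinder hβ]
    refine le_trans (ENNReal.ofReal_le_ofReal ?_) hN.le
    simp_rw [sub_sq_comm (α _)]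
    refine sum_patternWeight_le_exp hβ hα fun f hf => ?_
    have : ¬ patternWeight α f ≤ patternWeight β f := by simpa [T] using hf
    exact (not_le.1 this).le

theorem Icc_quarter_subset_Icc_zero_one : Icc (1 / 4 : ℝ) (3 / 4) ⊆ Icc 0 1 :=
  Icc_subset_Icc (by norm_num) (by norm_num)

theorem IsBernoulliProduct.absolutelyContinuous_of_summable (hμ : IsBernoulliProduct α μ)
    (hν : IsBernoulliProduct β ν) (hα : ∀ n, α n ∈ Icc (1 / 4) (3 / 4)) (hβ : ∀ n, β n ∈ Icc 0 1)
    (h : Summable fun n => (α n - β n) ^ 2) : ν ≪ μ := by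
  have hα' : ∀ n, α n ∈ Icc 0 1 := fun n => Icc_quarter_subset_Icc_zero_one (hα n)
  have := hμ.isProbabilityMeasure
  refine absolutelyContinuous_of_sq_le_mul
    (ENNReal.ofReal_ne_top (r := Real.exp (6 * ∑' n, (α n - β n) ^ 2))) fun N T => ?_
  rw [hμ.measure_prefixCylinder hα', hν.measure_prefixCylinder hβ,
    ← ENNReal.ofReal_pow (Finset.sum_nonneg fun f _ => patternWeight_nonneg hβ f),
    ← ENNReal.ofReal_mul (Real.exp_nonneg _)]
  refine ENNReal.ofReal_le_ofReal ((sq_sum_patternWeight_le hα T).trans ?_)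
  gcongr
  · exact Finset.sum_nonneg fun f _ => patternWeight_nonneg hα' f
  · exact h.sum_le_tsum _ fun n _ => sq_nonneg _

theorem IsBernoulliProduct.absolutelyContinuous_iff_summable (hμ : IsBernoulliProduct α μ)
    (hν : IsBernoulliProduct β ν) (hα : ∀ n, α n ∈ Icc (1 / 4) (3 / 4))
    (hβ : ∀ n, β n ∈ Icc (1 / 4) (3 / 4)) : ν ≪ μ ↔ Summable fun n => (α n - β n) ^ 2 :=
  have hβ' n := Icc_quarter_subset_Icc_zero_one (hβ n)
  ⟨fun h => by_contra fun hs => hμ.not_absolutelyContinuous_of_not_summable hν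
    (fun n => Icc_quarter_subset_Icc_zero_one (hα n)) hβ' hs h,
    hμ.absolutelyContinuous_of_summable hν hα hβ'⟩

end Kakutani

theorem Nat.count_congr_of_forall_lt {p q : ℕ → Prop} [DecidablePred p] [DecidablePred q] {n : ℕ}
    (h : ∀ k < n, p k ↔ q k) : Nat.count p n = Nat.count q n :=
  le_antisymm (Nat.count_mono_left fun k hk => (h k hk).1)
    (Nat.count_mono_left fun k hk => (h k hk).2)

section Counting

variable (p : ℕ → Prop) [DecidablePred p]

theorem Nat.sum_range_ite_count {M : Type*} [AddCommMonoid M] (G : ℕ → M) (N : ℕ) :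
    ∑ n ∈ Finset.range N, (if p n then G (Nat.count p n) else 0)
      = ∑ k ∈ Finset.range (Nat.count p N), G k := by
  induction N with
  | zero => simp
  | succ N ih => by_cases h : p N <;> simp [Finset.sum_range_succ, Nat.count_succ, h, ih]

theorem summable_ite_count {G : ℕ → ℝ} (hG : Summable G) (hG0 : ∀ k, 0 ≤ G k) :
    Summable fun n => if p n then G (Nat.count p n) else 0 :=
  summable_of_sum_range_le (fun n => by split_ifs <;> simp [hG0]) fun N => by
    rw [Nat.sum_range_ite_count]
    exact hG.sum_le_tsum _ fun k _ => hG0 k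

theorem Nat.tendsto_count_atTop (hp : {n | p n}.Infinite) : Tendsto (Nat.count p) atTop atTop :=
  tendsto_atTop_atTop.2 fun b => ⟨Nat.nth p b, fun _ ha =>
    (Nat.count_nth_of_infinite hp b).symm.le.trans (Nat.count_monotone p ha)⟩

end Counting

section AlphaSeq

def alphaBump (k : ℕ) : ℝ := 1 / (2 * √(k + 1))

variable {w : Set ℕ} {n : ℕ}

theorem alphaSeq_of_mem_s12 [DecidablePred (· ∈ w)] (h : n ∈ w) :
    alphaSeq w n = 1 / 4 + alphaBump (Nat.count (· ∈ w) n) := by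
  simp only [alphaSeq, h, if_true, alphaBump]
  congr

theorem alphaSeq_of_not_mem (h : n ∉ w) : alphaSeq w n = 1 / 4 := by
  simp [alphaSeq, h]

theorem alphaBump_mem_Icc (k : ℕ) : alphaBump k ∈ Icc 0 (1 / 2) := by
  have : 1 ≤ √((k : ℝ) + 1) := Real.one_le_sqrt.2 (by linarith [k.cast_nonneg (α := ℝ)])
  refine ⟨by unfold alphaBump; positivity, ?_⟩
  rw [alphaBump, div_le_div_iff₀ (by linarith) (by norm_num)]
  linarith

theorem alphaSeq_mem_Icc (w : Set ℕ) (n : ℕ) : alphaSeq w n ∈ Icc (1 / 4) (3 / 4) := by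
  classical
  by_cases h : n ∈ w
  · obtain ⟨h0, h1⟩ := alphaBump_mem_Icc (Nat.count (· ∈ w) n)
    rw [alphaSeq_of_mem_s12 h]
    constructor <;> linarith
  · rw [alphaSeq_of_not_mem h]
    norm_num

theorem alphaBump_sq (k : ℕ) : alphaBump k ^ 2 = 1 / (4 * (k + 1)) := by
  rw [alphaBump, div_pow, mul_pow, Real.sq_sqrt (by positivity)]
  norm_num

theorem sq_alphaBump_sub_alphaBump_add_le (k d : ℕ) :
    (alphaBump k - alphaBump (k + d)) ^ 2 ≤ (d : ℝ) ^ 2 / (k + 1) ^ 3 := by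
  set s := √((k : ℝ) + 1)
  set t := √((k : ℝ) + d + 1)
  have hs1 : 1 ≤ s := Real.one_le_sqrt.2 (by linarith [k.cast_nonneg (α := ℝ)])
  have hs2 : s ^ 2 = k + 1 := Real.sq_sqrt (by positivity)
  have ht2 : t ^ 2 = k + d + 1 := Real.sq_sqrt (by positivity)
  have hst : s ≤ t := Real.sqrt_le_sqrt (by linarith [d.cast_nonneg (α := ℝ)])
  -- `t - s = d / (t + s) ≤ d / (2 s)`, so the difference is at most `d / (4 s³)`
  have hdiff : alphaBump k - alphaBump (k + d) = d / (2 * s * t * (t + s)) := by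
    have hs : alphaBump k = 1 / (2 * s) := rfl
    have ht : alphaBump (k + d) = 1 / (2 * t) := by simp [alphaBump, t]
    rw [hs, ht, div_sub_div _ _ (by positivity) (by positivity),
      div_eq_div_iff (by positivity) (by positivity)]
    linear_combination (4 * s * t) * (ht2 - hs2)
  have hle : (d : ℝ) / (2 * s * t * (t + s)) ≤ d / (4 * s ^ 3) :=
    div_le_div_of_nonneg_left (by positivity) (by positivity)
      (by nlinarith [mul_le_mul hst hst (by linarith) (by linarith)])
  calc (alphaBump k - alphaBump (k + d)) ^ 2 ≤ ((d : ℝ) / (4 * s ^ 3)) ^ 2 := by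
        rw [hdiff]; gcongr
    _ = (d : ℝ) ^ 2 / (16 * (s ^ 2) ^ 3) := by ring
    _ ≤ (d : ℝ) ^ 2 / (k + 1) ^ 3 := by
        rw [hs2]; gcongr; nlinarith [pow_pos (show (0 : ℝ) < k + 1 by positivity) 3]

theorem sq_alphaBump_add_sub_le (a b c : ℕ) :
    (alphaBump (c + a) - alphaBump (c + b)) ^ 2 ≤ ((a : ℝ) - b) ^ 2 / (c + 1) ^ 3 := by
  wlog hab : a ≤ b generalizing a b
  · simpa [sub_sq_comm] using this b a (by omega)
  obtain ⟨d, rfl⟩ := Nat.exists_eq_add_of_le hab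
  calc (alphaBump (c + a) - alphaBump (c + (a + d))) ^ 2 ≤ (d : ℝ) ^ 2 / (c + a + 1) ^ 3 := by
        simpa [add_assoc] using sq_alphaBump_sub_alphaBump_add_le (c + a) d
    _ ≤ ((a : ℝ) - (a + d : ℕ)) ^ 2 / (c + 1) ^ 3 := by
        push_cast
        rw [show (a : ℝ) - (a + d) = -d by ring, neg_sq]
        gcongr
        linarith [a.cast_nonneg (α := ℝ)]

end AlphaSeq

theorem summable_sq_alphaSeq_sub_of_forall_ge {y z : Set ℕ} {m : ℕ}
    (h : ∀ n ≥ m, n ∈ y ↔ n ∈ z) : Summable fun n => (alphaSeq y n - alphaSeq z n) ^ 2 := by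
  classical
  rw [← summable_nat_add_iff m]
  set q : ℕ → Prop := fun k => k + m ∈ z
  -- beyond `m` both counting functions are shifts of the same one
  have hcount : ∀ w : Set ℕ, (∀ k, k + m ∈ w ↔ q k) →
      ∀ k, Nat.count (· ∈ w) (k + m) = Nat.count q k + Nat.count (· ∈ w) m := fun w hw k => by
    rw [Nat.count_add']
    exact congrArg (· + _) (Nat.count_congr_of_forall_lt fun j _ => hw j)
  have hy := hcount y fun k => h _ (Nat.le_add_left m k)
  have hz := hcount z fun k => Iff.rfl
  set G : ℕ → ℝ := fun c =>
    ((Nat.count (· ∈ y) m : ℝ) - Nat.count (· ∈ z) m) ^ 2 / (c + 1) ^ 3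
  have hG : Summable G := by
    refine (((summable_nat_add_iff 1).2 (Real.summable_one_div_nat_pow.2 (by norm_num : 1 < 3))
      ).mul_left (((Nat.count (· ∈ y) m : ℝ) - Nat.count (· ∈ z) m) ^ 2)).congr fun c => ?_
    simp only [G, Nat.cast_add, Nat.cast_one]
    ring
  refine (summable_ite_count q hG fun c => by positivity).of_nonneg_of_le (fun _ => sq_nonneg _)
    fun k => ?_
  by_cases hk : q k
  · rw [if_pos hk, alphaSeq_of_mem_s12 ((h _ (Nat.le_add_left m k)).2 hk), alphaSeq_of_mem_s12 hk, hy, hz]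
    simpa [G] using sq_alphaBump_add_sub_le _ _ (Nat.count q k)
  · rw [if_neg hk, alphaSeq_of_not_mem hk,
      alphaSeq_of_not_mem (mt (h _ (Nat.le_add_left m k)).1 hk), sub_self, sq, mul_zero]

theorem exists_le_sum_sq_alphaSeq_sub {z : Set ℕ} (hz : z.Infinite) (m : ℕ) (R : ℝ) :
    ∃ M, ∀ y : Set ℕ, (∀ n, m < n → n ≤ M → n ∉ y) →
      R ≤ ∑ n ∈ Finset.range (M + 1), (alphaSeq y n - alphaSeq z n) ^ 2 := by
  classical
  set g : ℕ → ℝ := fun k => 1 / (4 * (k + 1))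
  set H : ℕ → ℝ := fun N => ∑ k ∈ Finset.range (Nat.count (· ∈ z) N), g k
  -- on `z \ y` the squared differences are `alphaBump² = g ∘ count`, a harmonic series
  have hH : Tendsto (fun M => H (M + 1)) atTop atTop := by
    have hg : Tendsto (fun K => ∑ k ∈ Finset.range K, g k) atTop atTop :=
      (Real.tendsto_sum_range_one_div_nat_succ_atTop.const_mul_atTop
        (by norm_num : (0 : ℝ) < 1 / 4)).congr fun K => by
          rw [Finset.mul_sum]
          exact Finset.sum_congr rfl fun k _ => by simp only [g]; field_simp
    exact (hg.comp (Nat.tendsto_count_atTop (· ∈ z) hz)).comp (tendsto_add_atTop_nat 1)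
  obtain ⟨M, hRM, hmM⟩ :=
    ((hH.eventually_ge_atTop (R + H (m + 1))).and (eventually_ge_atTop m)).exists
  refine ⟨M, fun y hy => ?_⟩
  calc R ≤ H (M + 1) - H (m + 1) := by linarith
    _ = ∑ n ∈ Finset.Ico (m + 1) (M + 1), (if n ∈ z then g (Nat.count (· ∈ z) n) else 0) := by
        rw [Finset.sum_Ico_eq_sub _ (by omega), Nat.sum_range_ite_count, Nat.sum_range_ite_count]
    _ = ∑ n ∈ Finset.Ico (m + 1) (M + 1), (alphaSeq y n - alphaSeq z n) ^ 2 := by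
        refine Finset.sum_congr rfl fun n hn => ?_
        obtain ⟨h1, h2⟩ := Finset.mem_Ico.1 hn
        rw [alphaSeq_of_not_mem (hy n (by omega) (by omega))]
        by_cases hnz : n ∈ z
        · rw [if_pos hnz, alphaSeq_of_mem_s12 hnz, sub_add_cancel_left, neg_sq, alphaBump_sq]
        · rw [if_neg hnz, alphaSeq_of_not_mem hnz, sub_self, sq, mul_zero]
    _ ≤ ∑ n ∈ Finset.range (M + 1), (alphaSeq y n - alphaSeq z n) ^ 2 :=
        Finset.sum_le_sum_of_subset_of_nonneg (fun n hn => Finset.mem_range.2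
          (Finset.mem_Ico.1 hn).2) fun _ _ _ => sq_nonneg _

theorem alphaSeq_toSet_congr {f g : ℕ → Bool} {n : ℕ} (h : ∀ k ≤ n, f k = g k) :
    alphaSeq (toSet f) n = alphaSeq (toSet g) n := by
  classical
  have hmem : ∀ k ≤ n, k ∈ toSet f ↔ k ∈ toSet g := fun k hk => by simp [toSet, h k hk]
  by_cases hn : n ∈ toSet f
  · rw [alphaSeq_of_mem_s12 hn, alphaSeq_of_mem_s12 ((hmem n le_rfl).1 hn),
      Nat.count_congr_of_forall_lt fun k hk => hmem k hk.le]
  · rw [alphaSeq_of_not_mem hn, alphaSeq_of_not_mem (mt (hmem n le_rfl).2 hn)]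

theorem continuous_alphaSeq_toSet (n : ℕ) : Continuous fun f : ℕ → Bool => alphaSeq (toSet f) n :=
  ((IsLocallyConstant.iff_eventually_eq _).2 fun f =>
    Filter.mem_of_superset ((PiNat.isOpen_cylinder _ f (n + 1)).mem_nhds
      (PiNat.self_mem_cylinder f _)) fun _ hg =>
        alphaSeq_toSet_congr fun k hk => hg k (Nat.lt_succ_of_le hk)).continuous

section Splice

def splice (m : ℕ) (f g : ℕ → Bool) : ℕ → Bool := fun n => if n ≤ m then f n else g n

variable {m n : ℕ} {f g : ℕ → Bool}

theorem splice_of_le (h : n ≤ m) : splice m f g n = f n := if_pos h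

theorem splice_of_lt (h : m < n) : splice m f g n = g n := if_neg (not_le.2 h)

theorem toSet_splice_subset : toSet (splice m f g) ⊆ toSet f ∪ toSet g := fun n hn => by
  by_cases h : n ≤ m
  · exact Or.inl (by simpa [toSet, splice_of_le h] using hn)
  · exact Or.inr (by simpa [toSet, splice_of_lt (not_le.1 h)] using hn)

theorem toSet_splice_infinite (hg : (toSet g).Infinite) : (toSet (splice m f g)).Infinite :=
  (hg.sdiff (finite_Iic m)).mono fun n hn => by
    simpa [toSet, splice_of_lt (not_le.1 hn.2)] using hn.1

end Splice

/-- `[x]^ω`, coded by characteristic functions. -/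
abbrev InfiniteSubsets (x : Set ℕ) : Type := {f : ℕ → Bool // (toSet f).Infinite ∧ toSet f ⊆ x}

theorem dense_of_forall_exists_agree {p : (ℕ → Bool) → Prop} {E : Set {f // p f}}
    (h : ∀ w : {f // p f}, ∀ m, ∃ e ∈ E, ∀ n ≤ m, e.1 n = w.1 n) : Dense E := by
  refine dense_iff_inter_open.2 fun U hU ⟨w, hw⟩ => ?_
  obtain ⟨V, hV, rfl⟩ := isOpen_induced_iff.1 hU
  obtain ⟨m, hm⟩ := hV.exists_cylinder_subset hw
  obtain ⟨e, he, hew⟩ := h w m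
  exact ⟨e, hm fun n hn => hew n hn.le, he⟩

variable {x : Set ℕ}

theorem dense_setOf_summable_sq_alphaSeq_sub (z : InfiniteSubsets x) :
    Dense {y : InfiniteSubsets x |
      Summable fun n => (alphaSeq (toSet y.1) n - alphaSeq (toSet z.1) n) ^ 2} := by
  refine dense_of_forall_exists_agree fun w m => ?_
  refine ⟨⟨splice m w.1 z.1, toSet_splice_infinite z.2.1,
    toSet_splice_subset.trans (union_subset w.2.2 z.2.2)⟩, ?_, fun n hn => splice_of_le hn⟩
  exact summable_sq_alphaSeq_sub_of_forall_ge (m := m + 1) fun n hn => by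
    simp [toSet, splice_of_lt (show m < n by omega)]

theorem isMeagre_setOf_summable_sq_alphaSeq_sub (z : InfiniteSubsets x) :
    IsMeagre {y : InfiniteSubsets x |
      Summable fun n => (alphaSeq (toSet y.1) n - alphaSeq (toSet z.1) n) ^ 2} := by
  let S : ℕ → InfiniteSubsets x → ℝ := fun M y =>
    ∑ n ∈ Finset.range M, (alphaSeq (toSet y.1) n - alphaSeq (toSet z.1) n) ^ 2
  let K : ℕ → Set (InfiniteSubsets x) := fun N => {y | ∀ M, S M y ≤ N}
  have hcover : {y : InfiniteSubsets x |
      Summable fun n => (alphaSeq (toSet y.1) n - alphaSeq (toSet z.1) n) ^ 2} ⊆ ⋃ N, K N :=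
    fun y hy => mem_iUnion.2 ⟨⌈∑' n, (alphaSeq (toSet y.1) n - alphaSeq (toSet z.1) n) ^ 2⌉₊,
      fun M => (hy.sum_le_tsum _ fun n _ => sq_nonneg _).trans (Nat.le_ceil _)⟩
  have hclosed : ∀ N, IsClosed (K N) := fun N => by
    simp only [K, ofPred_forall]
    exact isClosed_iInter fun M => isClosed_le (continuous_finsetSum _ fun n _ =>
      (((continuous_alphaSeq_toSet n).comp continuous_subtype_val).sub continuous_const).pow 2)
      continuous_const
  -- emptying a long enough block after any finite stem pushes the partial sums past `N`
  have hdense : ∀ N, Dense (K N)ᶜ := fun N => dense_of_forall_exists_agree fun w m => by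
    obtain ⟨M, hM⟩ := exists_le_sum_sq_alphaSeq_sub z.2.1 m (N + 1)
    let e := splice m w.1 (splice M (fun _ => false) z.1)
    have hgap : ∀ n, m < n → n ≤ M → n ∉ toSet e := fun n hmn hnM => by
      simp [e, toSet, splice_of_lt hmn, splice_of_le hnM]
    refine ⟨⟨e, toSet_splice_infinite (toSet_splice_infinite z.2.1),
      toSet_splice_subset.trans (union_subset w.2.2 (toSet_splice_subset.trans
        (union_subset (fun n hn => by simp [toSet] at hn) z.2.2)))⟩,
      fun hK => ?_, fun n hn => splice_of_le hn⟩
    have := hM _ hgap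
    linarith [hK (M + 1)]
  exact (isMeagre_iUnion fun N => ((hclosed N).isNowhereDense_iff.2
    (interior_eq_empty_iff_dense_compl.2 (hdense N))).isMeagre).mono hcover

theorem equivClass_dense_and_meagre_general (μ : Set ℕ → Measure (ℕ → Bool))
    (hμ : ∀ w : Set ℕ, IsKakutaniProduct w (μ w))
    (x : Set ℕ)
    (z : {f : ℕ → Bool // (toSet f).Infinite ∧ toSet f ⊆ x}) :
    Dense {y : {f : ℕ → Bool // (toSet f).Infinite ∧ toSet f ⊆ x} |
        μ (toSet y.1) ≪ μ (toSet z.1) ∧ μ (toSet z.1) ≪ μ (toSet y.1)} ∧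
    IsMeagre {y : {f : ℕ → Bool // (toSet f).Infinite ∧ toSet f ⊆ x} |
        μ (toSet y.1) ≪ μ (toSet z.1) ∧ μ (toSet z.1) ≪ μ (toSet y.1)} := by
  have hclass : {y : InfiniteSubsets x |
        μ (toSet y.1) ≪ μ (toSet z.1) ∧ μ (toSet z.1) ≪ μ (toSet y.1)}
      = {y | Summable fun n => (alphaSeq (toSet y.1) n - alphaSeq (toSet z.1) n) ^ 2} := by
    ext y
    have hy := (hμ (toSet y.1)).isBernoulliProduct
    have hz := (hμ (toSet z.1)).isBernoulliProduct
    rw [mem_ofPred_eq, mem_ofPred_eq,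
      hz.absolutelyContinuous_iff_summable hy (alphaSeq_mem_Icc _) (alphaSeq_mem_Icc _),
      hy.absolutelyContinuous_iff_summable hz (alphaSeq_mem_Icc _) (alphaSeq_mem_Icc _)]
    simp_rw [sub_sq_comm (alphaSeq (toSet z.1) _), and_self]
  rw [hclass]
  exact ⟨dense_setOf_summable_sq_alphaSeq_sub z, isMeagre_setOf_summable_sq_alphaSeq_sub z⟩

/-- For `x ∈ [ω]^ω`, every class of the equivalence relation `∼^x` on `[x]^ω`
(`z ∼^x y` iff `μ^z` and `μ^y` are equivalent) is dense and meagre in `[x]^ω`,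
viewed as the subspace of Cantor space of characteristic functions of infinite
subsets of `x`. -/
theorem equivClass_dense_and_meagre (μ : Set ℕ → Measure (ℕ → Bool))
    (hμ : ∀ w : Set ℕ, IsKakutaniProduct w (μ w))
    (x : Set ℕ) (hx : x.Infinite)
    (z : {f : ℕ → Bool // (toSet f).Infinite ∧ toSet f ⊆ x}) :
    Dense {y : {f : ℕ → Bool // (toSet f).Infinite ∧ toSet f ⊆ x} |
        μ (toSet y.1) ≪ μ (toSet z.1) ∧ μ (toSet z.1) ≪ μ (toSet y.1)} ∧
    IsMeagre {y : {f : ℕ → Bool // (toSet f).Infinite ∧ toSet f ⊆ x} |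
        μ (toSet y.1) ≪ μ (toSet z.1) ∧ μ (toSet z.1) ≪ μ (toSet y.1)} :=
  equivClass_dense_and_meagre_general μ hμ x z

end
end
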